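/- arXiv:1505.08071 — 2 statements merged into one kernel-verified Lean document; each statement's English description precedes it below -/
import Mathlib

section
/- Let G be a finite group acting by linear isometries on Euclidean space X, and let z ∈ X have trivial isotropy group. Set ρ* = (1/4) min { ‖z - g•z‖ : g ∈ G, g ≠ identity }. Then for every 0 < ρ ≤ ρ*, the restriction of the natural projection to the open ball B(z, ρ) is an isometry onto the ball B([z], ρ) in the orbit space: for all x, y ∈ B(z, ρ), d([x],[y]) = ‖x - y‖. -/
/-- for an ordinary point `z` and `0 < ρ ≤ (1/4) min_{g ≠ 1} ‖z - g•z‖`,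
the projection restricted to the ball `B(z, ρ)` is an isometry onto its image:
`d([x],[y]) = ‖x - y‖` for all `x, y ∈ B(z, ρ)`. -/
theorem stmt_17 {G X : Type*} [Group G] [Fintype G]
    [NormedAddCommGroup X] [InnerProductSpace ℝ X] [FiniteDimensional ℝ X]
    [DistribMulAction G X] [SMulCommClass G ℝ X]
    (hiso : ∀ (g : G) (x : X), ‖g • x‖ = ‖x‖) (z : X)
    (hz : ∀ g : G, g • z = z → g = 1) (ρ : ℝ) (hρ : 0 < ρ)
    (hρle : ∀ g : G, g ≠ 1 → ρ ≤ ‖z - g • z‖ / 4) :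
    ∀ x ∈ Metric.ball z ρ, ∀ y ∈ Metric.ball z ρ,
      (⨅ g : G, ‖x - g • y‖) = ‖x - y‖ := by
  intro x hx y hy
  rw [Metric.mem_ball, dist_eq_norm] at hx hy
  apply le_antisymm
  · have := ciInf_le (Finite.bddBelow_range fun g : G => ‖x - g • y‖) (1 : G)
    simpa using this
  · apply le_ciInf
    intro g
    by_cases hg : g = 1
    · simp [hg]
    · have h4 : 4 * ρ ≤ ‖z - g • z‖ := by linarith [hρle g hg]
      have hgy : ‖g • y - g • z‖ = ‖y - z‖ := by rw [← smul_sub, hiso]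
      have htri : ‖z - g • z‖ ≤ ‖z - x‖ + ‖x - g • y‖ + ‖g • y - g • z‖ := by
        calc ‖z - g • z‖ = ‖(z - x) + (x - g • y) + (g • y - g • z)‖ := by congr 1; abel
          _ ≤ ‖z - x‖ + ‖x - g • y‖ + ‖g • y - g • z‖ := by
              exact le_trans (norm_add_le _ _) (by linarith [norm_add_le (z - x) (x - g • y)])
      have hzx : ‖z - x‖ < ρ := by rwa [norm_sub_rev]
      have hxy : ‖x - y‖ ≤ ‖x - z‖ + ‖z - y‖ := norm_sub_le_norm_sub_add_norm_sub x z y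
      have hzy : ‖z - y‖ < ρ := by rwa [norm_sub_rev]
      rw [hgy] at htri
      linarith
end

section
/- Let G be a finite group acting by linear isometries on Euclidean space X, κ(x,y) = max_{g∈G} ⟨x, g•y⟩, and let z have trivial isotropy. Let D_z be its Dirichlet fundamental domain and C(z,ρ) = { x : ∃ λ > 0, λ • x ∈ B(z,ρ) } the cone circumscribing the ball B(z,ρ). For 0 < ρ ≤ (1/2) min { ‖z - x‖ : x ∈ ∂D_z }, the cone C(z,ρ) is contained in the interior of D_z, and for all x, y ∈ C(z,ρ) one has κ(x,y) = ⟨x, y⟩, hence d([x],[y]) = ‖x - y‖ (the projection restricted to C(z,ρ) is an isometry). -/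
open scoped RealInnerProductSpace
open InnerProductGeometry Real Set Pointwise
section helpers
variable {X : Type*} [NormedAddCommGroup X] [InnerProductSpace ℝ X]

private lemma inner_ge_aux19 {u v w : X} (hu : ‖u‖ = 1) (hv : ‖v‖ = 1) (hw : ‖w‖ = 1) :
    ⟪u,v⟫ * ⟪v,w⟫ - Real.sqrt (1 - ⟪u,v⟫^2) * Real.sqrt (1 - ⟪v,w⟫^2) ≤ ⟪u,w⟫ := by
  set p := ⟪u,v⟫ with hp
  set q := ⟪v,w⟫ with hq
  have hvv : ⟪v,v⟫ = 1 := by rw [real_inner_self_eq_norm_sq, hv]; norm_num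
  have h1 : ‖u - p • v‖^2 = 1 - p^2 := by
    rw [norm_sub_sq_real, real_inner_smul_right, norm_smul, hu, hv]
    simp only [Real.norm_eq_abs, mul_one]
    nlinarith [sq_abs p]
  have h2 : ‖w - q • v‖^2 = 1 - q^2 := by
    have hwv : ⟪w,v⟫ = q := by rw [real_inner_comm, ← hq]
    rw [norm_sub_sq_real, real_inner_smul_right, norm_smul, hw, hv, hwv]
    simp only [Real.norm_eq_abs, mul_one]
    nlinarith [sq_abs q]
  have hs1 : Real.sqrt (1 - p^2) = ‖u - p • v‖ := by
    rw [← h1, Real.sqrt_sq (norm_nonneg _)]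
  have hs2 : Real.sqrt (1 - q^2) = ‖w - q • v‖ := by
    rw [← h2, Real.sqrt_sq (norm_nonneg _)]
  have h3 : ⟪u - p • v, w - q • v⟫ = ⟪u,w⟫ - p * q := by
    have hwv : ⟪w,v⟫ = q := by rw [real_inner_comm, ← hq]
    have hvu : ⟪v,u⟫ = p := by rw [real_inner_comm, ← hp]
    simp only [inner_sub_left, inner_sub_right, real_inner_smul_left, real_inner_smul_right,
      hvv, hwv, hvu, ← hp, ← hq]
    ring
  have h4 := abs_real_inner_le_norm (u - p • v) (w - q • v)
  rw [h3] at h4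
  have h5 := abs_le.mp h4
  rw [hs1, hs2]
  nlinarith [h5.1]

private lemma cos_angle_unit {u v : X} (hu : ‖u‖ = 1) (hv : ‖v‖ = 1) :
    Real.cos (angle u v) = ⟪u,v⟫ := by
  rw [cos_angle, hu, hv]; norm_num

private lemma sin_angle_unit {u v : X} (hu : ‖u‖ = 1) (hv : ‖v‖ = 1) :
    Real.sin (angle u v) = Real.sqrt (1 - ⟪u,v⟫^2) := by
  have h := sin_angle_mul_norm_mul_norm u v
  rw [hu, hv, real_inner_self_eq_norm_sq, real_inner_self_eq_norm_sq, hu, hv] at h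
  simpa [← sq] using h

private lemma angle_triangle19 (u v w : X) : angle u w ≤ angle u v + angle v w := by
  rcases eq_or_ne u 0 with rfl | hu0
  · rw [angle_zero_left, angle_zero_left]
    linarith [angle_nonneg v w]
  rcases eq_or_ne w 0 with rfl | hw0
  · rw [angle_zero_right, angle_zero_right]
    linarith [angle_nonneg u v]
  rcases eq_or_ne v 0 with rfl | hv0
  · rw [angle_zero_right, angle_zero_left]
    linarith [angle_le_pi u w]
  -- normalize
  have hnu : (0:ℝ) < ‖u‖⁻¹ := inv_pos.mpr (norm_pos_iff.mpr hu0)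
  have hnv : (0:ℝ) < ‖v‖⁻¹ := inv_pos.mpr (norm_pos_iff.mpr hv0)
  have hnw : (0:ℝ) < ‖w‖⁻¹ := inv_pos.mpr (norm_pos_iff.mpr hw0)
  set u' := ‖u‖⁻¹ • u with hu'
  set v' := ‖v‖⁻¹ • v with hv'
  set w' := ‖w‖⁻¹ • w with hw'
  have hu1 : ‖u'‖ = 1 := by
    rw [hu', norm_smul, Real.norm_eq_abs, abs_of_pos hnu, inv_mul_cancel₀ (norm_ne_zero_iff.mpr hu0)]
  have hv1 : ‖v'‖ = 1 := by
    rw [hv', norm_smul, Real.norm_eq_abs, abs_of_pos hnv, inv_mul_cancel₀ (norm_ne_zero_iff.mpr hv0)]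
  have hw1 : ‖w'‖ = 1 := by
    rw [hw', norm_smul, Real.norm_eq_abs, abs_of_pos hnw, inv_mul_cancel₀ (norm_ne_zero_iff.mpr hw0)]
  have e1 : angle u w = angle u' w' := by
    rw [hu', hw', angle_smul_left_of_pos _ _ hnu, angle_smul_right_of_pos _ _ hnw]
  have e2 : angle u v = angle u' v' := by
    rw [hu', hv', angle_smul_left_of_pos _ _ hnu, angle_smul_right_of_pos _ _ hnv]
  have e3 : angle v w = angle v' w' := by
    rw [hv', hw', angle_smul_left_of_pos _ _ hnv, angle_smul_right_of_pos _ _ hnw]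
  rw [e1, e2, e3]
  set a := angle u' v' with ha
  set b := angle v' w' with hb
  rcases le_or_gt π (a + b) with hab | hab
  · linarith [angle_le_pi u' w']
  have hcos : Real.cos (a + b) ≤ Real.cos (angle u' w') := by
    rw [Real.cos_add, cos_angle_unit hu1 hw1, ha, hb, cos_angle_unit hu1 hv1,
      cos_angle_unit hv1 hw1, sin_angle_unit hu1 hv1, sin_angle_unit hv1 hw1]
    exact inner_ge_aux19 hu1 hv1 hw1
  by_contra hlt
  push_neg at hlt
  have h1 : Real.cos (angle u' w') < Real.cos (a + b) :=
    Real.strictAntiOn_cos ⟨by linarith [angle_nonneg u' v', angle_nonneg v' w'], le_of_lt hab⟩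
      ⟨angle_nonneg u' w', angle_le_pi u' w'⟩ hlt
  linarith

private lemma angle_cone19 {x z : X} (hx : x ≠ 0) (hz : z ≠ 0) {l ρ : ℝ} (hl : 0 < l)
    (hd : ‖l • x - z‖ ≤ ρ) (hρz : ρ < ‖z‖) :
    Real.sin (angle x z) ≤ ρ / ‖z‖ ∧ angle x z < π / 2 := by
  have hn : (0:ℝ) < ‖x‖ := norm_pos_iff.mpr hx
  have hN : (0:ℝ) < ‖z‖ := norm_pos_iff.mpr hz
  have hρ0 : 0 ≤ ρ := le_trans (norm_nonneg _) hd
  set i := ⟪x,z⟫ with hi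
  have hexp : ‖l • x - z‖^2 = l^2 * ‖x‖^2 - 2 * l * i + ‖z‖^2 := by
    rw [norm_sub_sq_real, real_inner_smul_left, norm_smul, Real.norm_eq_abs, abs_of_pos hl]
    ring
  have hs : l^2 * ‖x‖^2 - 2 * l * i + ‖z‖^2 ≤ ρ^2 := by
    rw [← hexp]
    nlinarith [norm_nonneg (l • x - z)]
  have hipos : 0 < i := by nlinarith
  have hkey : ‖x‖^2 * ‖z‖^2 - i^2 ≤ ‖x‖^2 * ρ^2 := by
    nlinarith [sq_nonneg (l * ‖x‖ - i / ‖x‖), sq_nonneg (l * ‖x‖^2 - i)]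
  have hcos : Real.cos (angle x z) = i / (‖x‖ * ‖z‖) := cos_angle x z
  have hcospos : 0 < Real.cos (angle x z) := by
    rw [hcos]; positivity
  have hang2 : angle x z < π / 2 := by
    by_contra hle
    push_neg at hle
    have : Real.cos (angle x z) ≤ 0 :=
      Real.cos_nonpos_of_pi_div_two_le_of_le hle
        (le_trans (angle_le_pi x z) (by linarith [Real.pi_pos]))
    linarith
  refine ⟨?_, hang2⟩
  have hsin0 : 0 ≤ Real.sin (angle x z) :=
    Real.sin_nonneg_of_nonneg_of_le_pi (angle_nonneg x z) (angle_le_pi x z)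
  have hsinsq : Real.sin (angle x z)^2 = 1 - (i / (‖x‖ * ‖z‖))^2 := by
    rw [Real.sin_sq, hcos]
  have hle : Real.sin (angle x z)^2 ≤ (ρ / ‖z‖)^2 := by
    rw [hsinsq, div_pow, div_pow]
    rw [sub_le_iff_le_add]
    rw [div_add_div _ _ (by positivity : (‖z‖:ℝ)^2 ≠ 0) (by positivity : ((‖x‖ * ‖z‖):ℝ)^2 ≠ 0),
      le_div_iff₀ (by positivity)]
    ring_nf
    nlinarith [hkey, sq_nonneg i, hn, hN]
  have hρN : 0 ≤ ρ / ‖z‖ := by positivity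
  nlinarith [hle, hsin0, hρN]

end helpers

private lemma trig19 {s α β γ : ℝ} (hs0 : 0 < s) (hs12 : s ≤ 1 / 2)
    (hα0 : 0 ≤ α) (haπ2 : α < π / 2) (hβ0 : 0 ≤ β) (hbπ2 : β < π / 2)
    (hsa : Real.sin α ≤ s) (hsb : Real.sin β ≤ s)
    (hγ0 : 0 ≤ γ) (hγπ : γ ≤ π) (hcosγ : Real.cos γ ≤ 1 - 8 * s ^ 2) :
    2 * α + 2 * β ≤ γ := by
  have hsa0 : 0 ≤ Real.sin α := Real.sin_nonneg_of_nonneg_of_le_pi hα0 (by linarith [Real.pi_pos])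
  have hsb0 : 0 ≤ Real.sin β := Real.sin_nonneg_of_nonneg_of_le_pi hβ0 (by linarith [Real.pi_pos])
  have hca0 : 0 ≤ Real.cos α := Real.cos_nonneg_of_mem_Icc ⟨by linarith [Real.pi_pos], le_of_lt haπ2⟩
  have hcb0 : 0 ≤ Real.cos β := Real.cos_nonneg_of_mem_Icc ⟨by linarith [Real.pi_pos], le_of_lt hbπ2⟩
  have hca1 : Real.cos α ≤ 1 := Real.cos_le_one α
  have hcb1 : Real.cos β ≤ 1 := Real.cos_le_one β
  have hα6 : α ≤ π / 6 := by
    by_contra hgt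
    push_neg at hgt
    have h1 : Real.sin (π / 6) < Real.sin α :=
      Real.strictMonoOn_sin ⟨by linarith [Real.pi_pos], by linarith [Real.pi_pos]⟩
        ⟨by linarith [Real.pi_pos], le_of_lt haπ2⟩ hgt
    rw [Real.sin_pi_div_six] at h1
    linarith
  have hβ6 : β ≤ π / 6 := by
    by_contra hgt
    push_neg at hgt
    have h1 : Real.sin (π / 6) < Real.sin β :=
      Real.strictMonoOn_sin ⟨by linarith [Real.pi_pos], by linarith [Real.pi_pos]⟩
        ⟨by linarith [Real.pi_pos], le_of_lt hbπ2⟩ hgt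
    rw [Real.sin_pi_div_six] at h1
    linarith
  have habπ : 2 * α + 2 * β ≤ π := by linarith [Real.pi_pos]
  have hcos2ab : 1 - 8 * s ^ 2 ≤ Real.cos (2 * α + 2 * β) := by
    rw [Real.cos_add, Real.cos_two_mul, Real.cos_two_mul, Real.sin_two_mul, Real.sin_two_mul]
    have hca2 : Real.cos α ^ 2 = 1 - Real.sin α ^ 2 := by
      have := Real.sin_sq_add_cos_sq α; linarith
    have hcb2 : Real.cos β ^ 2 = 1 - Real.sin β ^ 2 := by
      have := Real.sin_sq_add_cos_sq β; linarith
    have hprod : (2 * Real.cos α ^ 2 - 1) * (2 * Real.cos β ^ 2 - 1) =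
        1 - 2 * Real.sin α ^ 2 - 2 * Real.sin β ^ 2 + 4 * (Real.sin α ^ 2 * Real.sin β ^ 2) := by
      rw [hca2, hcb2]; ring
    have h1 : Real.sin α ^ 2 ≤ s ^ 2 := pow_le_pow_left₀ hsa0 hsa 2
    have h2 : Real.sin β ^ 2 ≤ s ^ 2 := pow_le_pow_left₀ hsb0 hsb 2
    have h3 : 2 * Real.sin α * Real.cos α * (2 * Real.sin β * Real.cos β) ≤ 4 * (s * s) := by
      have ha' : Real.sin α * Real.cos α ≤ s :=
        le_trans (mul_le_of_le_one_right hsa0 hca1) hsa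
      have hb' : Real.sin β * Real.cos β ≤ s :=
        le_trans (mul_le_of_le_one_right hsb0 hcb1) hsb
      have ha0' : 0 ≤ Real.sin α * Real.cos α := mul_nonneg hsa0 hca0
      have hb0' : 0 ≤ Real.sin β * Real.cos β := mul_nonneg hsb0 hcb0
      nlinarith [mul_le_mul ha' hb' hb0' (le_of_lt hs0)]
    have h4 : 0 ≤ Real.sin α ^ 2 * Real.sin β ^ 2 := by positivity
    have hss : s * s = s ^ 2 := by ring
    linarith [hprod, h1, h2, h3, h4, hss]
  by_contra hlt
  push_neg at hlt
  have h1 : Real.cos (2 * α + 2 * β) < Real.cos γ :=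
    Real.strictAntiOn_cos ⟨hγ0, hγπ⟩ ⟨by linarith, habπ⟩ hlt
  linarith

/-- for an ordinary point `z`, the cone `C(z,ρ)` circumscribing the ball
`B(z,ρ)` with `0 < ρ ≤ (1/2) min {‖z - x‖ : x ∈ ∂D_z}` lies in the interior of the
Dirichlet domain `D_z`, and on it `κ(x,y) = ⟪x,y⟫` and `d([x],[y]) = ‖x - y‖`. -/
theorem stmt_19 {G X : Type*} [Group G] [Fintype G]
    [NormedAddCommGroup X] [InnerProductSpace ℝ X] [FiniteDimensional ℝ X]
    [DistribMulAction G X] [SMulCommClass G ℝ X]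
    (hiso : ∀ (g : G) (x : X), ‖g • x‖ = ‖x‖) (z : X)
    (hz : ∀ g : G, g • z = z → g = 1) (ρ : ℝ) (hρ : 0 < ρ)
    (hρle : ∀ x ∈ frontier {x : X | ∀ g : G, ⟪x, g • z⟫ ≤ ⟪x, z⟫},
      ρ ≤ ‖z - x‖ / 2) :
    {x : X | ∃ l : ℝ, 0 < l ∧ l • x ∈ Metric.closedBall z ρ} ⊆
      interior {x : X | ∀ g : G, ⟪x, g • z⟫ ≤ ⟪x, z⟫} ∧
    ∀ x ∈ {x : X | ∃ l : ℝ, 0 < l ∧ l • x ∈ Metric.closedBall z ρ},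
      ∀ y ∈ {x : X | ∃ l : ℝ, 0 < l ∧ l • x ∈ Metric.closedBall z ρ},
        (⨆ g : G, ⟪x, g • y⟫) = ⟪x, y⟫ ∧
        (⨅ g : G, ‖x - g • y‖) = ‖x - y‖ := by
  classical
  haveI : Nonempty G := One.instNonempty
  set D : Set X := {x : X | ∀ g : G, ⟪x, g • z⟫ ≤ ⟪x, z⟫} with hD
  -- inner products are preserved
  have hinner : ∀ (g : G) (x y : X), ⟪g • x, g • y⟫ = ⟪x, y⟫ := by
    intro g x y
    have h1 : ‖g • x + g • y‖ = ‖x + y‖ := by rw [← smul_add, hiso]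
    have e1 : ‖g • x + g • y‖^2 = ‖x + y‖^2 := by rw [h1]
    rw [norm_add_sq_real, norm_add_sq_real, hiso, hiso] at e1
    linarith
  have hangle_smul : ∀ (g : G) (u v : X), angle (g • u) (g • v) = angle u v := by
    intro g u v
    unfold InnerProductGeometry.angle
    rw [hinner, hiso, hiso]
  -- z is in the interior of D
  have hzD : z ∈ interior D := by
    set U : Set X := {x : X | ∀ g : G, g • z ≠ z → ⟪x, g • z⟫ < ⟪x, z⟫} with hU
    have hUopen : IsOpen U := by
      have : U = ⋂ g : G, {x : X | g • z ≠ z → ⟪x, g • z⟫ < ⟪x, z⟫} := by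
        ext x; simp [hU, Set.mem_iInter]
      rw [this]
      refine isOpen_iInter_of_finite fun g => ?_
      by_cases hg : g • z = z
      · simp [hg]
      · have : {x : X | g • z ≠ z → ⟪x, g • z⟫ < ⟪x, z⟫} = {x : X | ⟪x, g • z⟫ < ⟪x, z⟫} := by
          ext x; simp [hg]
        rw [this]
        exact isOpen_lt (continuous_id.inner continuous_const) (continuous_id.inner continuous_const)
    have hzU : z ∈ U := by
      intro g hg
      have hne : z - g • z ≠ 0 := sub_ne_zero.mpr (Ne.symm hg)
      have hpos : 0 < ‖z - g • z‖^2 := by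
        have := norm_pos_iff.mpr hne
        positivity
      rw [norm_sub_sq_real, hiso] at hpos
      have e2 : ‖z‖^2 = ⟪z, z⟫ := (real_inner_self_eq_norm_sq z).symm
      nlinarith
    have hUD : U ⊆ D := by
      intro x hx g
      by_cases hg : g • z = z
      · rw [hg]
      · exact le_of_lt (hx g hg)
    exact interior_maximal hUD hUopen hzU
  -- frontier crossing
  have hcross : ∀ w : X, w ∉ interior D → ∃ v ∈ frontier D, ‖z - v‖ ≤ ‖z - w‖ := by
    intro w hw
    set f : ℝ → X := fun t => z + t • (w - z) with hf
    have hfc : Continuous f := continuous_const.add (continuous_id.smul continuous_const)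
    have hf0 : f 0 = z := by simp [hf]
    have hf1 : f 1 = w := by simp [hf]
    set A : Set ℝ := Icc (0:ℝ) 1 ∩ f ⁻¹' (interior D)ᶜ with hA
    have hAclosed : IsClosed A := isClosed_Icc.inter (isOpen_interior.isClosed_compl.preimage hfc)
    have hAne : A.Nonempty := ⟨1, ⟨by norm_num, by norm_num⟩, by simp [hf1, hw]⟩
    have hAbdd : BddBelow A := ⟨0, fun t ht => ht.1.1⟩
    set t₀ := sInf A with ht₀
    have htA : t₀ ∈ A := hAclosed.csInf_mem hAne hAbdd
    have ht₀le : t₀ ≤ 1 := csInf_le hAbdd ⟨⟨by norm_num, le_refl 1⟩, by simp [hf1, hw]⟩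
    have ht₀pos : 0 < t₀ := by
      have hopen : IsOpen (f ⁻¹' interior D) := isOpen_interior.preimage hfc
      have h0mem : (0:ℝ) ∈ f ⁻¹' interior D := by simp [hf0, hzD]
      obtain ⟨δ, hδ, hball⟩ := Metric.isOpen_iff.mp hopen 0 h0mem
      have : δ ≤ t₀ := le_csInf hAne fun t ht => by
        by_contra hlt
        push_neg at hlt
        have : t ∈ Metric.ball (0:ℝ) δ := by
          rw [Metric.mem_ball, Real.dist_eq, sub_zero, abs_of_nonneg ht.1.1]
          exact hlt
        exact ht.2 (hball this)
      linarith
    have hIco : ∀ t ∈ Ico (0:ℝ) t₀, f t ∈ interior D := by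
      intro t ht
      by_contra hnot
      have : t ∈ A := ⟨⟨ht.1, le_trans (le_of_lt ht.2) ht₀le⟩, hnot⟩
      exact absurd (csInf_le hAbdd this) (not_le.mpr ht.2)
    have hmemcl : f t₀ ∈ closure (interior D) := by
      have h1 : t₀ ∈ closure (Ico (0:ℝ) t₀) := by
        rw [closure_Ico (ne_of_lt ht₀pos)]
        exact ⟨le_of_lt ht₀pos, le_refl _⟩
      have h2 : f t₀ ∈ f '' closure (Ico (0:ℝ) t₀) := mem_image_of_mem f h1
      have h3 : f '' closure (Ico (0:ℝ) t₀) ⊆ closure (f '' Ico (0:ℝ) t₀) :=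
        image_closure_subset_closure_image hfc
      refine closure_mono ?_ (h3 h2)
      rintro _ ⟨t, ht, rfl⟩
      exact hIco t ht
    refine ⟨f t₀, ⟨closure_mono interior_subset hmemcl, htA.2⟩, ?_⟩
    have he : z - f t₀ = -(t₀ • (w - z)) := by simp [hf]
    rw [he, norm_neg, norm_smul, Real.norm_eq_abs, abs_of_pos ht₀pos, norm_sub_rev w z]
    nlinarith [norm_nonneg (z - w)]
  -- closed ball inside interior D
  have hball : Metric.closedBall z ρ ⊆ interior D := by
    intro w hw
    by_contra hwn
    obtain ⟨v, hvf, hvle⟩ := hcross w hwn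
    have h1 := hρle v hvf
    have h2 : ‖z - w‖ ≤ ρ := by
      rw [← dist_eq_norm, dist_comm]
      exact Metric.mem_closedBall.mp hw
    linarith
  -- the cone is in interior D
  have hcone : {x : X | ∃ l : ℝ, 0 < l ∧ l • x ∈ Metric.closedBall z ρ} ⊆ interior D := by
    rintro x ⟨l, hl, hlx⟩
    have h1 : l • x ∈ interior D := hball hlx
    have h2 : IsOpen ((l⁻¹ • interior D : Set X)) := isOpen_interior.smul₀ (inv_ne_zero (ne_of_gt hl))
    have h3 : ((l⁻¹ • interior D : Set X)) ⊆ D := by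
      rintro _ ⟨u, hu, rfl⟩ g
      have hu' := interior_subset hu g
      rw [real_inner_smul_left, real_inner_smul_left]
      exact mul_le_mul_of_nonneg_left hu' (le_of_lt (inv_pos.mpr hl))
    have h4 : x ∈ ((l⁻¹ • interior D : Set X)) :=
      ⟨l • x, h1, inv_smul_smul₀ (ne_of_gt hl) x⟩
    exact interior_maximal h3 h2 h4
  -- key distance estimate
  have hT : ∀ g : G, g • z ≠ z → 4 * ρ ≤ ‖z - g • z‖ := by
    intro g hg
    set m : X := (2:ℝ)⁻¹ • (z + g • z) with hm
    have hmni : m ∉ interior D := by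
      intro hmem
      set d : X := g • z - z with hd
      have hd0 : d ≠ 0 := sub_ne_zero.mpr hg
      have hdn : (0:ℝ) < ‖d‖ := norm_pos_iff.mpr hd0
      have hmd : ⟪m, d⟫ = 0 := by
        rw [hm, hd, real_inner_smul_left, inner_sub_right, inner_add_left, inner_add_left]
        have e1 : ⟪g • z, g • z⟫ = ⟪z, z⟫ := hinner g z z
        have e2 : ⟪g • z, z⟫ = ⟪z, g • z⟫ := real_inner_comm _ _
        rw [e1, e2]
        ring
      obtain ⟨ε, hε, hballε⟩ := Metric.isOpen_iff.mp isOpen_interior m hmem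
      set c : ℝ := ε / (2 * ‖d‖) with hc
      have hcpos : 0 < c := by positivity
      set p : X := m + c • d with hp
      have hpball : p ∈ Metric.ball m ε := by
        rw [Metric.mem_ball, dist_eq_norm, hp, add_sub_cancel_left, norm_smul,
          Real.norm_eq_abs, abs_of_pos hcpos, hc]
        rw [div_mul_eq_mul_div, mul_comm]
        rw [div_lt_iff₀ (by positivity)]
        nlinarith
      have hpD : p ∈ D := interior_subset (hballε hpball)
      have hineq := hpD g
      have hcontra : ⟪p, d⟫ ≤ 0 := by
        rw [hd, inner_sub_right]
        linarith
      rw [hp, inner_add_left, hmd, real_inner_smul_left, real_inner_self_eq_norm_sq] at hcontra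
      nlinarith [mul_pos hcpos (pow_pos hdn 2)]
    obtain ⟨v, hvf, hvle⟩ := hcross m hmni
    have h1 := hρle v hvf
    have h2 : ‖z - m‖ = 2⁻¹ * ‖z - g • z‖ := by
      have he : z - m = (2:ℝ)⁻¹ • (z - g • z) := by
        obtain ⟨gz, hgz'⟩ : ∃ gz, g • z = gz := ⟨_, rfl⟩
        rw [hm, hgz']
        module
      rw [he, norm_smul, Real.norm_eq_abs]
      norm_num
    rw [h2] at hvle
    linarith
  -- the key inequality: κ(x,y) ≤ ⟪x,y⟫ on the cone
  have key2 : ∀ x ∈ {x : X | ∃ l : ℝ, 0 < l ∧ l • x ∈ Metric.closedBall z ρ},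
      ∀ y ∈ {x : X | ∃ l : ℝ, 0 < l ∧ l • x ∈ Metric.closedBall z ρ},
      ∀ g : G, ⟪x, g • y⟫ ≤ ⟪x, y⟫ := by
    rintro x ⟨l, hl, hlx⟩ y ⟨k, hk, hky⟩ g
    by_cases hgz : g • z = z
    · rw [hz g hgz, one_smul]
    rcases eq_or_ne x 0 with rfl | hx0
    · simp
    rcases eq_or_ne y 0 with rfl | hy0
    · simp
    have hz0 : z ≠ 0 := by
      rintro rfl
      exact hgz (smul_zero g)
    have hzn : (0:ℝ) < ‖z‖ := norm_pos_iff.mpr hz0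
    have hTg : 4 * ρ ≤ ‖z - g • z‖ := hT g hgz
    have hT2 : ‖z - g • z‖ ≤ 2 * ‖z‖ := by
      have h := norm_sub_le z (g • z)
      rw [hiso] at h
      linarith
    have hρz : ρ < ‖z‖ := by linarith
    set s : ℝ := ρ / ‖z‖ with hs
    have hs0 : 0 < s := div_pos hρ hzn
    have hs12 : s ≤ 1 / 2 := by
      rw [hs, div_le_div_iff₀ hzn (by norm_num)]
      linarith
    have hdx : ‖l • x - z‖ ≤ ρ := by
      rw [← dist_eq_norm]
      exact Metric.mem_closedBall.mp hlx
    have hdy : ‖k • y - z‖ ≤ ρ := by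
      rw [← dist_eq_norm]
      exact Metric.mem_closedBall.mp hky
    obtain ⟨hsa, haπ2⟩ := angle_cone19 hx0 hz0 hl hdx hρz
    obtain ⟨hsb, hbπ2⟩ := angle_cone19 hy0 hz0 hk hdy hρz
    rw [← hs] at hsa hsb
    set α := angle x z with hα
    set β := angle y z with hβ
    set γ := angle z (g • z) with hγ
    have hα0 : 0 ≤ α := angle_nonneg x z
    have hβ0 : 0 ≤ β := angle_nonneg y z
    have hγ0 : 0 ≤ γ := angle_nonneg _ _
    have hγπ : γ ≤ π := angle_le_pi _ _
    have hγge : 2 * α + 2 * β ≤ γ := by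
      have hcosγ : Real.cos γ ≤ 1 - 8 * s ^ 2 := by
        have he : ‖z - g • z‖ ^ 2 = 2 * ‖z‖ ^ 2 - 2 * ⟪z, g • z⟫ := by
          rw [norm_sub_sq_real, hiso]
          ring
        have h16 : 16 * ρ ^ 2 ≤ ‖z - g • z‖ ^ 2 := by nlinarith
        rw [he] at h16
        have hcc : Real.cos γ * (‖z‖ * ‖z‖) = ⟪z, g • z⟫ := by
          rw [hγ]
          have := cos_angle_mul_norm_mul_norm z (g • z)
          rwa [hiso] at this
        have hs2' : s ^ 2 * ‖z‖ ^ 2 = ρ ^ 2 := by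
          rw [hs]
          field_simp
        have hz2 : (0:ℝ) < ‖z‖ ^ 2 := by positivity
        have hcc2 : Real.cos γ * ‖z‖ ^ 2 = ⟪z, g • z⟫ := by rw [← hcc]; ring
        have hrhs : (1 - 8 * s ^ 2) * ‖z‖ ^ 2 = ‖z‖ ^ 2 - 8 * (s ^ 2 * ‖z‖ ^ 2) := by ring
        have hstep : Real.cos γ * ‖z‖ ^ 2 ≤ (1 - 8 * s ^ 2) * ‖z‖ ^ 2 := by
          rw [hcc2, hrhs, hs2']
          linarith
        exact le_of_mul_le_mul_right hstep hz2
      exact trig19 hs0 hs12 hα0 haπ2 hβ0 hbπ2 hsa hsb hγ0 hγπ hcosγ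
    -- triangle inequalities
    have htri1 : angle x y ≤ α + β := by
      have h := angle_triangle19 x z y
      rw [angle_comm z y] at h
      exact h
    have htri2 : γ ≤ α + angle x (g • y) + β := by
      have h1 : γ ≤ angle z x + angle x (g • z) := angle_triangle19 z x (g • z)
      have h2 : angle x (g • z) ≤ angle x (g • y) + angle (g • y) (g • z) :=
        angle_triangle19 x (g • y) (g • z)
      have h3 : angle (g • y) (g • z) = β := by rw [hangle_smul, hβ]
      have h4 : angle z x = α := by rw [angle_comm, hα]
      linarith
    have hge : α + β ≤ angle x (g • y) := by linarith
    have hcos_xy : Real.cos (α + β) ≤ Real.cos (angle x y) :=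
      Real.cos_le_cos_of_nonneg_of_le_pi (angle_nonneg x y) (by linarith) htri1
    have hcos_xgy : Real.cos (angle x (g • y)) ≤ Real.cos (α + β) :=
      Real.cos_le_cos_of_nonneg_of_le_pi (by linarith) (angle_le_pi x (g • y)) hge
    have e1 : ⟪x, g • y⟫ = Real.cos (angle x (g • y)) * (‖x‖ * ‖g • y‖) :=
      (cos_angle_mul_norm_mul_norm x (g • y)).symm
    have e2 : ⟪x, y⟫ = Real.cos (angle x y) * (‖x‖ * ‖y‖) :=
      (cos_angle_mul_norm_mul_norm x y).symm
    rw [e1, e2, hiso]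
    exact mul_le_mul_of_nonneg_right (le_trans hcos_xgy hcos_xy)
      (mul_nonneg (norm_nonneg x) (norm_nonneg y))
  -- conclusion
  refine ⟨hcone, ?_⟩
  intro x hx y hy
  constructor
  · apply le_antisymm
    · exact ciSup_le fun g => key2 x hx y hy g
    · have h := le_ciSup (f := fun g : G => ⟪x, g • y⟫) (Finite.bddAbove_range _) 1
      simpa using h
  · apply le_antisymm
    · have h := ciInf_le (f := fun g : G => ‖x - g • y‖) (Finite.bddBelow_range _) 1
      simpa using h
    · refine le_ciInf fun g => ?_
      have h2 := key2 x hx y hy g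
      have e1 : ‖x - g • y‖ ^ 2 = ‖x‖ ^ 2 - 2 * ⟪x, g • y⟫ + ‖y‖ ^ 2 := by
        rw [norm_sub_sq_real, hiso]
      have e2 : ‖x - y‖ ^ 2 = ‖x‖ ^ 2 - 2 * ⟪x, y⟫ + ‖y‖ ^ 2 := norm_sub_sq_real x y
      have hsq : ‖x - y‖ ^ 2 ≤ ‖x - g • y‖ ^ 2 := by
        rw [e1, e2]
        linarith
      calc ‖x - y‖ = Real.sqrt (‖x - y‖ ^ 2) := (Real.sqrt_sq (norm_nonneg _)).symm
        _ ≤ Real.sqrt (‖x - g • y‖ ^ 2) := Real.sqrt_le_sqrt hsq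
        _ = ‖x - g • y‖ := Real.sqrt_sq (norm_nonneg _)
end
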